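/- arXiv:1912.10967 — 5 statements merged into one kernel-verified Lean document; each statement's English description precedes it below -/
import Mathlib

section
/- There do not exist functions f_0, f_1, f_2, f_3, f_4 : {0,1} → {0,1} (indices in ℤ/5) such that f_0(1) + f_1(1) + f_2(1) + f_3(1) + f_4(1) ≡ 1 (mod 2) and, for every i ∈ ℤ/5, f_{i−1}(0) + f_i(1) + f_{i+1}(0) ≡ 0 (mod 2). In other words, no deterministic local strategy wins all six questions of the multipartite graph game MCG(C_5). -/
/-- **No perfect deterministic local strategy for `MCG(C₅)`.**
There do not exist local answer functions `f i : ZMod 2 → ZMod 2` (one for each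
player `i ∈ ℤ/5`, mapping the player's input bit to their answer bit) such that
`f 0 1 + f 1 1 + f 2 1 + f 3 1 + f 4 1 = 1` (mod 2) (winning the question `11111`)
and for every `i`, `f (i-1) 0 + f i 1 + f (i+1) 0 = 0` (mod 2)
(winning the question that gives input 1 to player `i` alone). -/
theorem no_perfect_classical_strategy_MCG_C5 :
    ¬ ∃ f : ZMod 5 → ZMod 2 → ZMod 2,
      (∑ i : ZMod 5, f i 1) = 1 ∧
      ∀ i : ZMod 5, f (i - 1) 0 + f i 1 + f (i + 1) 0 = 0 := by
  rintro ⟨f, hs, h⟩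
  have key : ∀ i : ZMod 5, f i 1 = f (i - 1) 0 + f (i + 1) 0 := by
    intro i
    have hi := h i
    revert hi
    generalize f (i - 1) 0 = a
    generalize f i 1 = b
    generalize f (i + 1) 0 = c
    revert a b c; decide
  have e1 : (∑ i : ZMod 5, f (i - 1) 0) = ∑ i : ZMod 5, f i 0 :=
    Fintype.sum_equiv (Equiv.subRight (1 : ZMod 5)) _ _ (fun i => rfl)
  have e2 : (∑ i : ZMod 5, f (i + 1) 0) = ∑ i : ZMod 5, f i 0 :=
    Fintype.sum_equiv (Equiv.addRight (1 : ZMod 5)) _ _ (fun i => rfl)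
  have : (1 : ZMod 2) = 0 := by
    rw [← hs]
    calc (∑ i : ZMod 5, f i 1) = ∑ i : ZMod 5, (f (i - 1) 0 + f (i + 1) 0) :=
          Finset.sum_congr rfl (fun i _ => key i)
      _ = (∑ i : ZMod 5, f (i - 1) 0) + ∑ i : ZMod 5, f (i + 1) 0 := Finset.sum_add_distrib
      _ = (∑ i : ZMod 5, f i 0) + ∑ i : ZMod 5, f i 0 := by rw [e1, e2]
      _ = 0 := CharTwo.add_self_eq_zero _
  exact absurd this (by decide)
end

section
/- For the game MCG(C_5) with the uniform distribution (probability 1/6 each) over its 6 questions, the maximum over all deterministic local strategies f = (f_0,…,f_4) of the probability of winning equals 5/6; i.e., every deterministic local strategy wins at most 5 of the 6 questions, and some deterministic local strategy wins exactly 5 of them. -/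
open Finset

/-- The 6 questions/types of the game on the 5-cycle: `none` is `Tₐ = 11111`;
`some i` is the question `Tᵢ` giving input bit 1 to player `i` and 0 to the others. -/
abbrev C5Type := Option (ZMod 5)

/-- Input (type) bit of player `j` in question `t` of `MCG(C₅)`/`NC₀₀(C₅)`. -/
def inputBit : C5Type → ZMod 5 → ZMod 2
  | none, _ => 1
  | some i, j => if j = i then 1 else 0

/-- The involved set of question `t`: all five players for `Tₐ`;
`{i-1, i, i+1}` for `Tᵢ`. -/
def involvedSet : C5Type → Finset (ZMod 5)
  | none => Finset.univ
  | some i => {i - 1, i, i + 1}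

/-- The target parity bit of question `t`: `1` for `Tₐ` and `0` for each `Tᵢ`. -/
def targetBit : C5Type → ZMod 2
  | none => 1
  | some _ => 0

/-- The number of the 6 questions of `MCG(C₅)` won by the deterministic local
strategy `f` (player `i` answers `f i b` on input bit `b`). -/
def winCount (f : ZMod 5 → ZMod 2 → ZMod 2) : ℕ :=
  (Finset.univ.filter (fun t : C5Type =>
    ∑ j ∈ involvedSet t, f j (inputBit t j) = targetBit t)).card

lemma winCount_ex : winCount (fun i b => if i = 0 ∧ b = 1 then 1 else 0) = 5 := by
  decide

lemma winCount_le (f : ZMod 5 → ZMod 2 → ZMod 2) : winCount f ≤ 5 := by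
  by_contra h
  push_neg at h
  unfold winCount at h
  have hcard : (Finset.univ.filter (fun t : C5Type =>
      ∑ j ∈ involvedSet t, f j (inputBit t j) = targetBit t)).card = 6 := by
    have hle : (Finset.univ.filter (fun t : C5Type =>
        ∑ j ∈ involvedSet t, f j (inputBit t j) = targetBit t)).card ≤ 6 := by
      have := Finset.card_le_univ (Finset.univ.filter (fun t : C5Type =>
        ∑ j ∈ involvedSet t, f j (inputBit t j) = targetBit t))
      simpa using this
    omega
  have huniv : (Finset.univ.filter (fun t : C5Type =>
      ∑ j ∈ involvedSet t, f j (inputBit t j) = targetBit t)) = Finset.univ := by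
    apply Finset.eq_univ_of_card
    simpa using hcard
  have hall : ∀ t : C5Type, ∑ j ∈ involvedSet t, f j (inputBit t j) = targetBit t := by
    intro t
    have := huniv ▸ Finset.mem_univ t
    exact (Finset.mem_filter.mp this).2
  have ha : ∑ j : ZMod 5, f j 1 = 1 := by
    have := hall none
    simpa [involvedSet, inputBit, targetBit] using this
  have key1 : ∀ j : ZMod 5, j - 1 ≠ j := by decide
  have key2 : ∀ j : ZMod 5, j - 1 ≠ j + 1 := by decide
  have key3 : ∀ j : ZMod 5, j ≠ j + 1 := by decide
  have hi : ∀ i : ZMod 5, f (i - 1) 0 + f i 1 + f (i + 1) 0 = 0 := by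
    intro i
    have h := hall (some i)
    have h1 := key1 i
    have h2 := key2 i
    have h3 := key3 i
    rw [involvedSet, targetBit, Finset.sum_insert (by simp [h1, h2]),
      Finset.sum_insert (by simp [h3]), Finset.sum_singleton] at h
    simp only [inputBit, if_neg h1, if_neg (Ne.symm h3), if_pos rfl] at h
    rw [← add_assoc] at h
    exact h
  have hsum : ∑ i : ZMod 5, (f (i - 1) 0 + f i 1 + f (i + 1) 0) = 0 := by
    simp [hi]
  rw [Finset.sum_add_distrib, Finset.sum_add_distrib] at hsum
  have e1 : ∑ i : ZMod 5, f (i - 1) 0 = ∑ i : ZMod 5, f i 0 :=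
    Fintype.sum_equiv (Equiv.subRight 1) _ _ (fun i => rfl)
  have e2 : ∑ i : ZMod 5, f (i + 1) 0 = ∑ i : ZMod 5, f i 0 :=
    Fintype.sum_equiv (Equiv.addRight 1) _ _ (fun i => rfl)
  rw [e1, e2, ha] at hsum
  have : ∀ x : ZMod 2, x + 1 + x ≠ 0 := by decide
  exact this _ hsum

/-- **Classical value of `MCG(C₅)` is `5/6`.** Under the uniform distribution on
the 6 questions, every deterministic local strategy wins with probability at most
`5/6` (i.e. wins at most 5 questions), and some deterministic local strategy wins
with probability exactly `5/6`. -/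
theorem classical_value_MCG_C5 :
    (∀ f : ZMod 5 → ZMod 2 → ZMod 2, (winCount f : ℝ) / 6 ≤ 5 / 6) ∧
    (∃ f : ZMod 5 → ZMod 2 → ZMod 2, (winCount f : ℝ) / 6 = 5 / 6) := by
  constructor
  · intro f
    have h := winCount_le f
    have : (winCount f : ℝ) ≤ 5 := by exact_mod_cast h
    linarith
  · exact ⟨_, by rw [winCount_ex]; norm_num⟩
end

section
/- For the game NC_00(C_5), there exists an advice correlation Q assigning to each of the 6 types t a probability distribution Q(t) on answer profiles s : ℤ/5 → {0,1} such that Q(t) is supported on profiles winning on t and, for each player j, the marginal of s_j under Q(t) is uniform on {0,1}. -/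
open Finset

/-- An answer profile `s` wins on type `t` of `NC₀₀(C₅)` iff the mod-2 sum of the
involved players' answers equals the target bit of `t`. -/
def winsOn (t : C5Type) (s : ZMod 5 → ZMod 2) : Prop :=
  ∑ j ∈ involvedSet t, s j = targetBit t

instance (t : C5Type) : DecidablePred (winsOn t) := fun s => by
  unfold winsOn; infer_instance

lemma card_wins (t : C5Type) :
    (Finset.univ.filter (winsOn t)).card = 16 := by
  revert t; decide

lemma card_wins_marg (t : C5Type) (j : ZMod 5) (σ : ZMod 2) :
    (Finset.univ.filter (fun s : ZMod 5 → ZMod 2 => s j = σ ∧ winsOn t s)).card = 8 := by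
  revert t j σ; decide

/-- **Existence of a perfect, per-player-uniform advice correlation for `NC₀₀(C₅)`.**
There is a correlation `Q` assigning to each of the 6 types a probability
distribution on answer profiles that is supported on profiles winning on that type
and gives each player a uniformly random answer bit (this is the classical
description of the quantum graph-state strategy). -/
theorem exists_winning_uniform_advice_NC00_C5 :
    ∃ Q : C5Type → (ZMod 5 → ZMod 2) → ℝ,
      ∀ t : C5Type,
        (∀ s : ZMod 5 → ZMod 2, 0 ≤ Q t s) ∧
        (∑ s : ZMod 5 → ZMod 2, Q t s = 1) ∧
        (∀ s : ZMod 5 → ZMod 2, Q t s ≠ 0 → winsOn t s) ∧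
        (∀ (j : ZMod 5) (σ : ZMod 2),
          ∑ s ∈ Finset.univ.filter (fun s : ZMod 5 → ZMod 2 => s j = σ), Q t s = 1 / 2) := by
  refine ⟨fun t s => if winsOn t s then (16 : ℝ)⁻¹ else 0, fun t => ⟨?_, ?_, ?_, ?_⟩⟩
  · intro s; dsimp only; split <;> norm_num
  · rw [← Finset.sum_filter]
    simp [Finset.sum_const, card_wins t]
  · intro s h; dsimp only at h
    by_contra hw; simp [hw] at h
  · intro j σ
    rw [← Finset.sum_filter, Finset.filter_filter]
    simp only [Finset.sum_const, nsmul_eq_mul]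
    rw [card_wins_marg t j σ]
    norm_num
end

section
/- Let an n-player parity game be given by a finite nonempty type set T ⊆ {0,1}^n with a probability distribution w on T, for each t ∈ T a nonempty involved set I(t) ⊆ {0,…,n−1} and a bit b(t) ∈ {0,1}, and reals 0 ≤ v_0 ≤ v_1 with v_1 > 0; an answer profile s wins on t iff Σ_{j ∈ I(t)} s_j ≡ b(t) (mod 2), and player j's payoff on (s,t) is v_{s_j} if s wins on t and 0 otherwise. Let Q assign to each t ∈ T a probability distribution Q(t) on answer profiles, supported on profiles winning on t, and consider the joint distribution of (t, s) with t ~ w and s ~ Q(t). For a player i, a type bit τ and an advice bit σ with Pr[t_i = τ, s_i = σ] > 0, let p_inv^{(i)}(τ, σ) = Pr[i ∈ I(t) | t_i = τ, s_i = σ], and let p = min of p_inv^{(i)}(τ, 0) over all players i and type bits τ with Pr[t_i = τ, s_i = 0] > 0. Then following the advice is a Nash equilibrium — i.e., for every player i, no deviation rule d_i : {0,1} × {0,1} → {0,1} (applied to the pair (own type bit, own advice bit), all other players answering their advice) gives player i a strictly larger expected payoff than answering their own advice — if and only if v_0 / v_1 ≥ 1 − p. -/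
open Finset

/-- Payoff of player `i` on the pair (answer profile `s`, type `t`) in the
`n`-player parity game with involved sets `I`, target bits `b` and
personal utilities `v0, v1`: `v_{s i}` if `s` wins on `t`, else `0`. -/
def parityPayoff (n : ℕ) (I : (Fin n → ZMod 2) → Finset (Fin n))
    (b : (Fin n → ZMod 2) → ZMod 2) (v0 v1 : ℝ) (i : Fin n)
    (s t : Fin n → ZMod 2) : ℝ :=
  if ∑ k ∈ I t, s k = b t then (if s i = 1 then v1 else v0) else 0

/-- Expected payoff of player `i` when the type is drawn from `w` on `T`,
every player answers according to the advice `Q`. -/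
def adviceUtil (n : ℕ) (T : Finset (Fin n → ZMod 2))
    (I : (Fin n → ZMod 2) → Finset (Fin n)) (b : (Fin n → ZMod 2) → ZMod 2)
    (v0 v1 : ℝ) (w : (Fin n → ZMod 2) → ℝ)
    (Q : (Fin n → ZMod 2) → (Fin n → ZMod 2) → ℝ) (i : Fin n) : ℝ :=
  ∑ t ∈ T, ∑ s : Fin n → ZMod 2, w t * Q t s * parityPayoff n I b v0 v1 i s t

/-- Expected payoff of player `i` when everybody else follows the advice but
player `i` applies the deviation rule `d` to the pair
(own type bit, own advice bit). -/
def deviationUtil (n : ℕ) (T : Finset (Fin n → ZMod 2))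
    (I : (Fin n → ZMod 2) → Finset (Fin n)) (b : (Fin n → ZMod 2) → ZMod 2)
    (v0 v1 : ℝ) (w : (Fin n → ZMod 2) → ℝ)
    (Q : (Fin n → ZMod 2) → (Fin n → ZMod 2) → ℝ) (i : Fin n)
    (d : ZMod 2 → ZMod 2 → ZMod 2) : ℝ :=
  ∑ t ∈ T, ∑ s : Fin n → ZMod 2, w t * Q t s *
    parityPayoff n I b v0 v1 i (Function.update s i (d (t i) (s i))) t

/-- `Pr[tᵢ = τ, sᵢ = σ]` under the joint distribution `t ~ w`, `s ~ Q t`. -/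
def prTypeAdvice (n : ℕ) (T : Finset (Fin n → ZMod 2))
    (w : (Fin n → ZMod 2) → ℝ) (Q : (Fin n → ZMod 2) → (Fin n → ZMod 2) → ℝ)
    (i : Fin n) (τ σ : ZMod 2) : ℝ :=
  ∑ t ∈ T.filter (fun t => t i = τ),
    ∑ s ∈ Finset.univ.filter (fun s : Fin n → ZMod 2 => s i = σ), w t * Q t s

/-- `p_inv^{(i)}(τ, σ) = Pr[i ∈ I(t) | tᵢ = τ, sᵢ = σ]`. -/
noncomputable def prInvolved (n : ℕ) (T : Finset (Fin n → ZMod 2))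
    (I : (Fin n → ZMod 2) → Finset (Fin n))
    (w : (Fin n → ZMod 2) → ℝ) (Q : (Fin n → ZMod 2) → (Fin n → ZMod 2) → ℝ)
    (i : Fin n) (τ σ : ZMod 2) : ℝ :=
  (∑ t ∈ T.filter (fun t => t i = τ ∧ i ∈ I t),
      ∑ s ∈ Finset.univ.filter (fun s : Fin n → ZMod 2 => s i = σ), w t * Q t s) /
    prTypeAdvice n T w Q i τ σ


section AuxNash

variable {n : ℕ} (T : Finset (Fin n → ZMod 2))
  (I : (Fin n → ZMod 2) → Finset (Fin n))
  (w : (Fin n → ZMod 2) → ℝ) (Q : (Fin n → ZMod 2) → (Fin n → ZMod 2) → ℝ)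

/-- value of answering `σ` : `v_σ`. -/
def valF (v0 v1 : ℝ) (σ : ZMod 2) : ℝ := if σ = 1 then v1 else v0

/-- Pr[tᵢ = τ, sᵢ = σ, i ∈ I t]. -/
def AinN (i : Fin n) (τ σ : ZMod 2) : ℝ :=
  ∑ t ∈ T.filter (fun t => t i = τ ∧ i ∈ I t),
    ∑ s ∈ Finset.univ.filter (fun s : Fin n → ZMod 2 => s i = σ), w t * Q t s

/-- Pr[tᵢ = τ, sᵢ = σ, i ∉ I t]. -/
def AoutN (i : Fin n) (τ σ : ZMod 2) : ℝ :=
  ∑ t ∈ T.filter (fun t => t i = τ ∧ ¬ i ∈ I t),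
    ∑ s ∈ Finset.univ.filter (fun s : Fin n → ZMod 2 => s i = σ), w t * Q t s

lemma zmod2_cases (x : ZMod 2) : x = 0 ∨ x = 1 := by revert x; decide

lemma prTypeAdvice_split (i : Fin n) (τ σ : ZMod 2) :
    prTypeAdvice n T w Q i τ σ = AinN T I w Q i τ σ + AoutN T I w Q i τ σ := by
  unfold prTypeAdvice AinN AoutN
  rw [← Finset.sum_filter_add_sum_filter_not (T.filter (fun t => t i = τ))
      (fun t => i ∈ I t), Finset.filter_filter, Finset.filter_filter]

lemma util_diff_eq {n : ℕ} (T : Finset (Fin n → ZMod 2))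
    (I : (Fin n → ZMod 2) → Finset (Fin n)) (b : (Fin n → ZMod 2) → ZMod 2)
    (v0 v1 : ℝ) (w : (Fin n → ZMod 2) → ℝ)
    (Q : (Fin n → ZMod 2) → (Fin n → ZMod 2) → ℝ)
    (hQwin : ∀ t ∈ T, ∀ s : Fin n → ZMod 2, Q t s ≠ 0 → ∑ j ∈ I t, s j = b t)
    (i : Fin n) (d : ZMod 2 → ZMod 2 → ZMod 2) :
    adviceUtil n T I b v0 v1 w Q i - deviationUtil n T I b v0 v1 w Q i d
      = ∑ σ : ZMod 2, ∑ τ : ZMod 2,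
          (AinN T I w Q i τ σ * (if d τ σ = σ then 0 else valF v0 v1 σ)
            + AoutN T I w Q i τ σ * (valF v0 v1 σ - valF v0 v1 (d τ σ))) := by
  set G : (Fin n → ZMod 2) → ZMod 2 → ℝ := fun t σ =>
    if i ∈ I t then (if d (t i) σ = σ then 0 else valF v0 v1 σ)
    else (valF v0 v1 σ - valF v0 v1 (d (t i) σ)) with hG
  have key : ∀ t ∈ T, ∀ s : Fin n → ZMod 2,
      w t * Q t s * parityPayoff n I b v0 v1 i s t
        - w t * Q t s *
            parityPayoff n I b v0 v1 i (Function.update s i (d (t i) (s i))) t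
      = w t * Q t s * G t (s i) := by
    intro t ht s
    by_cases hq : Q t s = 0
    · simp [hq]
    have hwin : ∑ j ∈ I t, s j = b t := hQwin t ht s hq
    rw [hG]
    by_cases hin : i ∈ I t
    · by_cases hd : d (t i) (s i) = s i
      · have hupd : Function.update s i (d (t i) (s i)) = s := by
          rw [hd]; exact Function.update_eq_self i s
        rw [hupd]
        simp [hin, hd]
      · have hlose : ∑ k ∈ I t, Function.update s i (d (t i) (s i)) k ≠ b t := by
          rw [Finset.sum_update_of_mem hin,
            Finset.sum_eq_add_sum_sdiff_singleton_of_mem hin s] at *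
          intro hEq
          apply hd
          have h2 : d (t i) (s i) - s i = 0 := by linear_combination hEq - hwin
          exact sub_eq_zero.mp h2
        simp only [parityPayoff, if_pos hwin, if_neg hlose, if_pos hin, if_neg hd,
          valF, mul_zero, sub_zero]
    · have hsame : ∑ k ∈ I t, Function.update s i (d (t i) (s i)) k
          = ∑ k ∈ I t, s k := by
        refine Finset.sum_congr rfl fun k hk => ?_
        exact Function.update_of_ne (fun h : k = i => hin (h ▸ hk)) _ s
      simp only [parityPayoff, hsame, if_pos hwin, if_neg hin,
        Function.update_self, valF]
      ring
  have step1 : adviceUtil n T I b v0 v1 w Q i - deviationUtil n T I b v0 v1 w Q i d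
      = ∑ t ∈ T, ∑ s : Fin n → ZMod 2, w t * Q t s * G t (s i) := by
    unfold adviceUtil deviationUtil
    rw [← Finset.sum_sub_distrib]
    refine Finset.sum_congr rfl fun t ht => ?_
    rw [← Finset.sum_sub_distrib]
    exact Finset.sum_congr rfl fun s _ => key t ht s
  rw [step1]
  have step2 : ∀ t : Fin n → ZMod 2,
      (∑ s : Fin n → ZMod 2, w t * Q t s * G t (s i))
      = ∑ σ : ZMod 2,
          (∑ s ∈ Finset.univ.filter (fun s : Fin n → ZMod 2 => s i = σ),
            w t * Q t s) * G t σ := by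
    intro t
    rw [← Finset.sum_fiberwise Finset.univ (fun s : Fin n → ZMod 2 => s i)
      (fun s => w t * Q t s * G t (s i))]
    refine Finset.sum_congr rfl fun σ _ => ?_
    rw [Finset.sum_mul]
    refine Finset.sum_congr rfl fun s hs => ?_
    rw [(Finset.mem_filter.mp hs).2]
  calc ∑ t ∈ T, ∑ s : Fin n → ZMod 2, w t * Q t s * G t (s i)
      = ∑ t ∈ T, ∑ σ : ZMod 2,
          (∑ s ∈ Finset.univ.filter (fun s : Fin n → ZMod 2 => s i = σ),
            w t * Q t s) * G t σ := Finset.sum_congr rfl fun t _ => step2 t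
    _ = ∑ σ : ZMod 2, ∑ t ∈ T,
          (∑ s ∈ Finset.univ.filter (fun s : Fin n → ZMod 2 => s i = σ),
            w t * Q t s) * G t σ := Finset.sum_comm
    _ = ∑ σ : ZMod 2, ∑ τ : ZMod 2,
          (AinN T I w Q i τ σ * (if d τ σ = σ then 0 else valF v0 v1 σ)
            + AoutN T I w Q i τ σ * (valF v0 v1 σ - valF v0 v1 (d τ σ))) := by
      refine Finset.sum_congr rfl fun σ _ => ?_
      rw [← Finset.sum_fiberwise T (fun t : Fin n → ZMod 2 => t i)
        (fun t => (∑ s ∈ Finset.univ.filter (fun s : Fin n → ZMod 2 => s i = σ),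
          w t * Q t s) * G t σ)]
      refine Finset.sum_congr rfl fun τ _ => ?_
      rw [← Finset.sum_filter_add_sum_filter_not (T.filter (fun t => t i = τ))
        (fun t => i ∈ I t), Finset.filter_filter, Finset.filter_filter]
      unfold AinN AoutN
      rw [Finset.sum_mul, Finset.sum_mul]
      congr 1
      · refine Finset.sum_congr rfl fun t ht => ?_
        obtain ⟨-, hτ, hin⟩ := Finset.mem_filter.mp ht
        rw [hG]
        simp only [hτ, if_pos hin]
      · refine Finset.sum_congr rfl fun t ht => ?_
        obtain ⟨-, hτ, hin⟩ := Finset.mem_filter.mp ht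
        rw [hG]
        simp only [hτ, if_neg hin]

lemma AinN_nonneg {n : ℕ} (T : Finset (Fin n → ZMod 2))
    (I : (Fin n → ZMod 2) → Finset (Fin n)) (w : (Fin n → ZMod 2) → ℝ)
    (Q : (Fin n → ZMod 2) → (Fin n → ZMod 2) → ℝ)
    (hw : ∀ t ∈ T, 0 ≤ w t) (hQ : ∀ t ∈ T, ∀ s : Fin n → ZMod 2, 0 ≤ Q t s)
    (i : Fin n) (τ σ : ZMod 2) : 0 ≤ AinN T I w Q i τ σ := by
  refine Finset.sum_nonneg fun t ht => Finset.sum_nonneg fun s _ => ?_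
  have ht' := (Finset.mem_filter.mp ht).1
  exact mul_nonneg (hw t ht') (hQ t ht' s)

lemma AoutN_nonneg {n : ℕ} (T : Finset (Fin n → ZMod 2))
    (I : (Fin n → ZMod 2) → Finset (Fin n)) (w : (Fin n → ZMod 2) → ℝ)
    (Q : (Fin n → ZMod 2) → (Fin n → ZMod 2) → ℝ)
    (hw : ∀ t ∈ T, 0 ≤ w t) (hQ : ∀ t ∈ T, ∀ s : Fin n → ZMod 2, 0 ≤ Q t s)
    (i : Fin n) (τ σ : ZMod 2) : 0 ≤ AoutN T I w Q i τ σ := by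
  refine Finset.sum_nonneg fun t ht => Finset.sum_nonneg fun s _ => ?_
  have ht' := (Finset.mem_filter.mp ht).1
  exact mul_nonneg (hw t ht') (hQ t ht' s)

lemma prInvolved_eq_div {n : ℕ} (T : Finset (Fin n → ZMod 2))
    (I : (Fin n → ZMod 2) → Finset (Fin n)) (w : (Fin n → ZMod 2) → ℝ)
    (Q : (Fin n → ZMod 2) → (Fin n → ZMod 2) → ℝ) (i : Fin n) (τ σ : ZMod 2) :
    prInvolved n T I w Q i τ σ = AinN T I w Q i τ σ / prTypeAdvice n T w Q i τ σ :=
  rfl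

lemma zmod2_sum (f : ZMod 2 → ℝ) : ∑ x : ZMod 2, f x = f 0 + f 1 :=
  Fin.sum_univ_two f

end AuxNash

/-- **(Theorem 2 of the paper.)** In an `n`-player parity game with type
distribution `w` on `T`, nonempty involved sets, target bits `b`, utilities
`0 ≤ v0 ≤ v1`, `v1 > 0`, and advice `Q` that for each type is a probability
distribution supported on winning answer profiles, following the advice is a Nash
equilibrium (no player `i` has a deviation rule `d : (type bit, advice bit) ↦ answer`
that strictly improves their expected payoff) if and only if
`v0 / v1 ≥ 1 - p`, where `p` is the minimum of `p_inv^{(i)}(τ, 0)` over all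
players `i` and type bits `τ` with `Pr[tᵢ = τ, sᵢ = 0] > 0`. -/
theorem advice_nash_iff_ratio_ge_one_sub_p
    (n : ℕ) (T : Finset (Fin n → ZMod 2)) (hT : T.Nonempty)
    (I : (Fin n → ZMod 2) → Finset (Fin n)) (hI : ∀ t ∈ T, (I t).Nonempty)
    (b : (Fin n → ZMod 2) → ZMod 2)
    (v0 v1 : ℝ) (hv0 : 0 ≤ v0) (hv01 : v0 ≤ v1) (hv1 : 0 < v1)
    (w : (Fin n → ZMod 2) → ℝ) (hw : ∀ t ∈ T, 0 ≤ w t) (hwsum : ∑ t ∈ T, w t = 1)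
    (Q : (Fin n → ZMod 2) → (Fin n → ZMod 2) → ℝ)
    (hQnonneg : ∀ t ∈ T, ∀ s : Fin n → ZMod 2, 0 ≤ Q t s)
    (hQsum : ∀ t ∈ T, ∑ s : Fin n → ZMod 2, Q t s = 1)
    (hQwin : ∀ t ∈ T, ∀ s : Fin n → ZMod 2, Q t s ≠ 0 → ∑ j ∈ I t, s j = b t)
    (hne : ∃ (i : Fin n) (τ : ZMod 2), 0 < prTypeAdvice n T w Q i τ 0) :
    (∀ (i : Fin n) (d : ZMod 2 → ZMod 2 → ZMod 2),
        deviationUtil n T I b v0 v1 w Q i d ≤ adviceUtil n T I b v0 v1 w Q i)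
    ↔ v0 / v1 ≥ 1 - sInf {x : ℝ | ∃ (i : Fin n) (τ : ZMod 2),
        0 < prTypeAdvice n T w Q i τ 0 ∧ x = prInvolved n T I w Q i τ 0} := by
  set S : Set ℝ := {x : ℝ | ∃ (i : Fin n) (τ : ZMod 2),
      0 < prTypeAdvice n T w Q i τ 0 ∧ x = prInvolved n T I w Q i τ 0} with hS
  have hSub : S ⊆ Set.range (fun p : Fin n × ZMod 2 => prInvolved n T I w Q p.1 p.2 0) := by
    rintro x ⟨i, τ, -, rfl⟩; exact ⟨(i, τ), rfl⟩
  have hSfin : S.Finite := (Set.finite_range _).subset hSub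
  have hSne : S.Nonempty := by
    obtain ⟨i, τ, h⟩ := hne; exact ⟨_, i, τ, h, rfl⟩
  have hbdd : BddBelow S := hSfin.bddBelow
  have hAin0 : ∀ (i : Fin n) (τ σ : ZMod 2), 0 ≤ AinN T I w Q i τ σ :=
    fun i τ σ => AinN_nonneg T I w Q hw hQnonneg i τ σ
  have hAout0 : ∀ (i : Fin n) (τ σ : ZMod 2), 0 ≤ AoutN T I w Q i τ σ :=
    fun i τ σ => AoutN_nonneg T I w Q hw hQnonneg i τ σ
  have hzero : (0 : ZMod 2) ≠ 1 := by decide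
  have hone : (1 : ZMod 2) ≠ 0 := by decide
  constructor
  · -- Nash → ratio inequality
    intro hNash
    obtain ⟨i, τ, hP, hEq⟩ := hSne.csInf_mem hSfin
    set d : ZMod 2 → ZMod 2 → ZMod 2 :=
      fun τ' σ => if τ' = τ ∧ σ = 0 then 1 else σ with hd
    have h0 : 0 ≤ adviceUtil n T I b v0 v1 w Q i
        - deviationUtil n T I b v0 v1 w Q i d := by
      have := hNash i d; linarith
    rw [util_diff_eq T I b v0 v1 w Q hQwin i d] at h0
    have hsum : (∑ σ : ZMod 2, ∑ τ' : ZMod 2,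
        (AinN T I w Q i τ' σ * (if d τ' σ = σ then 0 else valF v0 v1 σ)
          + AoutN T I w Q i τ' σ * (valF v0 v1 σ - valF v0 v1 (d τ' σ))))
        = AinN T I w Q i τ 0 * v0 + AoutN T I w Q i τ 0 * (v0 - v1) := by
      simp only [zmod2_sum]
      rcases zmod2_cases τ with rfl | rfl <;>
        simp [hd, valF, hzero, hone] <;> ring
    rw [hsum] at h0
    have hPsplit := prTypeAdvice_split T I w Q i τ (0 : ZMod 2)
    rw [hEq, prInvolved_eq_div]
    set A := AinN T I w Q i τ 0
    set B := AoutN T I w Q i τ 0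
    set P := prTypeAdvice n T w Q i τ 0
    have hBv : B * v1 ≤ v0 * P := by nlinarith
    have h1 : 1 - A / P = B / P := by
      field_simp
      linarith
    rw [ge_iff_le, h1]
    exact (div_le_div_iff₀ hP hv1).mpr hBv
  · -- ratio inequality → Nash
    intro hratio i d
    have h0 : 0 ≤ adviceUtil n T I b v0 v1 w Q i
        - deviationUtil n T I b v0 v1 w Q i d := by
      rw [util_diff_eq T I b v0 v1 w Q hQwin i d]
      refine Finset.sum_nonneg fun σ _ => Finset.sum_nonneg fun τ _ => ?_
      rcases zmod2_cases σ with rfl | rfl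
      · rcases zmod2_cases (d τ 0) with hd0 | hd1
        · simp [hd0]
        · rw [hd1]
          have hval1 : valF v0 v1 1 = v1 := by simp [valF]
          have hval0 : valF v0 v1 0 = v0 := by simp [valF, hzero]
          rw [if_neg hone, hval0, hval1]
          have hPsplit := prTypeAdvice_split T I w Q i τ (0 : ZMod 2)
          set A := AinN T I w Q i τ 0
          set B := AoutN T I w Q i τ 0
          set P := prTypeAdvice n T w Q i τ 0
          have hA := hAin0 i τ 0
          have hB := hAout0 i τ 0
          rcases eq_or_lt_of_le (by linarith : (0:ℝ) ≤ P) with hP | hP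
          · have hA0 : A = 0 := by linarith
            have hB0 : B = 0 := by linarith
            rw [hA0, hB0]; simp
          · have hmem : prInvolved n T I w Q i τ 0 ∈ S := ⟨i, τ, hP, rfl⟩
            have hle : sInf S ≤ prInvolved n T I w Q i τ 0 := csInf_le hbdd hmem
            rw [prInvolved_eq_div] at hle
            have hrat2 : 1 - A / P ≤ v0 / v1 := by
              have : 1 - sInf S ≤ v0 / v1 := hratio
              have : 1 - A / P ≤ 1 - sInf S := by linarith
              linarith [hratio]
            have h1 : 1 - A / P = B / P := by
              field_simp
              linarith
            rw [h1] at hrat2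
            have hBv : B * v1 ≤ v0 * P := (div_le_div_iff₀ hP hv1).mp hrat2
            nlinarith
      · -- σ = 1 : always nonneg
        have hv : valF v0 v1 (d τ 1) ≤ v1 := by
          unfold valF; split <;> linarith
        have hval1 : valF v0 v1 1 = v1 := by simp [valF]
        rw [hval1]
        have hg : (0:ℝ) ≤ (if d τ 1 = 1 then (0:ℝ) else v1) := by
          split <;> linarith
        exact add_nonneg (mul_nonneg (hAin0 i τ 1) hg)
          (mul_nonneg (hAout0 i τ 1) (by linarith))
    linarith
end

section
/- For all reals v_0, v_1 with 0 < v_0, v_1 > 0 and v_0/v_1 < 1/3, the number of pure local strategy profiles (f_0,…,f_4), f_i : {0,1} → {0,1}, that are Nash equilibria of the game NC_00(C_5) with the uniform type distribution is exactly 20. -/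
set_option maxRecDepth 100000
set_option maxHeartbeats 4000000



open Finset

/-- Payoff of player `j` on (answer profile `s`, type `t`) in `NC₀₀(C₅)`:
`v_{s j}` if `s` wins on `t`, else `0`. -/
noncomputable def payoffOf (v0 v1 : ℝ) (j : ZMod 5) (s : ZMod 5 → ZMod 2)
    (t : C5Type) : ℝ :=
  if ∑ k ∈ involvedSet t, s k = targetBit t then (if s j = 1 then v1 else v0) else 0

/-- Expected payoff of player `j` under the pure local strategy profile `f`
(player `i` answers `f i b` on type bit `b`), with the type uniform on the 6 types. -/
noncomputable def pureUtil (v0 v1 : ℝ) (f : ZMod 5 → ZMod 2 → ZMod 2) (j : ZMod 5) : ℝ :=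
  (∑ t : C5Type, payoffOf v0 v1 j (fun i => f i (inputBit t i)) t) / 6

/-- The pure local strategy profile `f` is a Nash equilibrium of `NC₀₀(C₅)` with
the uniform type distribution: no player can strictly increase their expected
payoff by unilaterally replacing their local function. -/
def IsNashEq (v0 v1 : ℝ) (f : ZMod 5 → ZMod 2 → ZMod 2) : Prop :=
  ∀ (i : ZMod 5) (g : ZMod 2 → ZMod 2),
    pureUtil v0 v1 (Function.update f i g) i ≤ pureUtil v0 v1 f i

/-! ### Auxiliary decidable machinery -/

def winQ (f : ZMod 5 → ZMod 2 → ZMod 2) (t : C5Type) : Prop :=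
  ∑ k ∈ involvedSet t, f k (inputBit t k) = targetBit t

instance (f t) : Decidable (winQ f t) := by unfold winQ; infer_instance

/-- number of winning types (for the profile `f`) on which player `j` answers `b` -/
def nA (b : ZMod 2) (f : ZMod 5 → ZMod 2 → ZMod 2) (j : ZMod 5) : ℕ :=
  (Finset.univ.filter (fun t : C5Type => winQ f t ∧ f j (inputBit t j) = b)).card

def Good (a b c d : ℕ) : Prop := b ≤ d ∧ a + 3*b ≤ c + 3*d
def Bad (a b c d : ℕ) : Prop := d ≤ b ∧ c + 3*d ≤ a + 3*b ∧ (d < b ∨ c < a)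
instance (a b c d : ℕ) : Decidable (Good a b c d) := by unfold Good; infer_instance
instance (a b c d : ℕ) : Decidable (Bad a b c d) := by unfold Bad; infer_instance

/-- decidable Nash condition in terms of the win/answer counts -/
def NashD (f : ZMod 5 → ZMod 2 → ZMod 2) : Prop :=
  ∀ (i : ZMod 5) (g : ZMod 2 → ZMod 2),
    Good (nA 0 (Function.update f i g) i) (nA 1 (Function.update f i g) i) (nA 0 f i) (nA 1 f i)

/-- existence of a strongly profitable deviation -/
def BadEx (f : ZMod 5 → ZMod 2 → ZMod 2) : Prop :=
  ∃ (i : ZMod 5) (g : ZMod 2 → ZMod 2),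
    Bad (nA 0 (Function.update f i g) i) (nA 1 (Function.update f i g) i) (nA 0 f i) (nA 1 f i)

instance (f) : Decidable (NashD f) := by unfold NashD; infer_instance
instance (f) : Decidable (BadEx f) := by unfold BadEx; infer_instance

abbrev BBits := Bool × Bool × Bool × Bool × Bool × Bool × Bool × Bool × Bool × Bool

set_option synthInstance.maxHeartbeats 1000000 in
set_option synthInstance.maxSize 5000 in
instance instDecEqBBits : DecidableEq BBits := inferInstance

def zOfB (b : Bool) : ZMod 2 := if b then 1 else 0
def bOfZ (z : ZMod 2) : Bool := z = 1

lemma zOfB_bOfZ : ∀ z : ZMod 2, zOfB (bOfZ z) = z := by decide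
lemma bOfZ_zOfB : ∀ b : Bool, bOfZ (zOfB b) = b := by decide

/-- build a strategy profile from 10 bits -/
def mkB (x : BBits) : ZMod 5 → ZMod 2 → ZMod 2 := fun p q =>
  if p = 0 then (if q = 0 then zOfB x.1 else zOfB x.2.1)
  else if p = 1 then (if q = 0 then zOfB x.2.2.1 else zOfB x.2.2.2.1)
  else if p = 2 then (if q = 0 then zOfB x.2.2.2.2.1 else zOfB x.2.2.2.2.2.1)
  else if p = 3 then (if q = 0 then zOfB x.2.2.2.2.2.2.1 else zOfB x.2.2.2.2.2.2.2.1)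
  else (if q = 0 then zOfB x.2.2.2.2.2.2.2.2.1 else zOfB x.2.2.2.2.2.2.2.2.2)

def bOf (f : ZMod 5 → ZMod 2 → ZMod 2) : BBits :=
  (bOfZ (f 0 0), bOfZ (f 0 1), bOfZ (f 1 0), bOfZ (f 1 1), bOfZ (f 2 0), bOfZ (f 2 1),
   bOfZ (f 3 0), bOfZ (f 3 1), bOfZ (f 4 0), bOfZ (f 4 1))

lemma bOf_mkB' : ∀ a0 a1 b0 b1 c0 c1 d0 d1 e0 e1 : Bool,
    bOf (mkB (a0,a1,b0,b1,c0,c1,d0,d1,e0,e1)) = (a0,a1,b0,b1,c0,c1,d0,d1,e0,e1) := by decide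

lemma bOf_mkB (x : BBits) : bOf (mkB x) = x := by
  obtain ⟨a0,a1,b0,b1,c0,c1,d0,d1,e0,e1⟩ := x
  exact bOf_mkB' a0 a1 b0 b1 c0 c1 d0 d1 e0 e1

lemma mkB_surj (f : ZMod 5 → ZMod 2 → ZMod 2) : mkB (bOf f) = f := by
  funext p q
  have hp : ∀ y : ZMod 5, y = 0 ∨ y = 1 ∨ y = 2 ∨ y = 3 ∨ y = 4 := by decide
  have hq : ∀ y : ZMod 2, y = 0 ∨ y = 1 := by decide
  rcases hp p with rfl | rfl | rfl | rfl | rfl <;> rcases hq q with rfl | rfl <;>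
    simp only [mkB, bOf, zOfB_bOfZ] <;> rfl

lemma mkB_inj : Function.Injective mkB := fun x y hxy => by
  have := congrArg bOf hxy
  rwa [bOf_mkB, bOf_mkB] at this

/-- the 10-bit descriptions of the 20 Nash equilibria; bit `true` = answer 1 -/
def T20 : Finset BBits :=
  {(true,true,true,false,true,false,true,false,true,false),
   (true,false,true,true,true,false,true,false,true,false),
   (true,false,true,false,true,true,true,false,true,false),
   (true,true,true,true,true,true,true,false,true,false),
   (true,false,true,false,true,false,true,true,true,false),
   (true,true,true,true,true,false,true,true,true,false),
   (true,true,true,false,true,true,true,true,true,false),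
   (true,false,true,true,true,true,true,true,true,false),
   (true,true,true,true,true,true,true,true,false,true),
   (true,false,true,false,true,false,true,false,true,true),
   (true,true,true,true,true,false,true,false,true,true),
   (true,true,true,false,true,true,true,false,true,true),
   (true,false,true,true,true,true,true,false,true,true),
   (true,true,true,true,true,true,false,true,true,true),
   (true,true,true,false,true,false,true,true,true,true),
   (true,false,true,true,true,false,true,true,true,true),
   (true,true,true,true,false,true,true,true,true,true),
   (true,false,true,false,true,true,true,true,true,true),
   (true,true,false,true,true,true,true,true,true,true),
   (false,true,true,true,true,true,true,true,true,true)}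

lemma T20_card : T20.card = 20 := by decide

lemma key_fff : ∀ b1 c0 c1 d0 d1 e0 e1 : Bool,
    ((false,false,false,b1,c0,c1,d0,d1,e0,e1) ∈ T20 →
      NashD (mkB (false,false,false,b1,c0,c1,d0,d1,e0,e1))) ∧
    ((false,false,false,b1,c0,c1,d0,d1,e0,e1) ∉ T20 →
      BadEx (mkB (false,false,false,b1,c0,c1,d0,d1,e0,e1))) := by
  decide

lemma key_fft : ∀ b1 c0 c1 d0 d1 e0 e1 : Bool,
    ((false,false,true,b1,c0,c1,d0,d1,e0,e1) ∈ T20 →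
      NashD (mkB (false,false,true,b1,c0,c1,d0,d1,e0,e1))) ∧
    ((false,false,true,b1,c0,c1,d0,d1,e0,e1) ∉ T20 →
      BadEx (mkB (false,false,true,b1,c0,c1,d0,d1,e0,e1))) := by
  decide

lemma key_ftf : ∀ b1 c0 c1 d0 d1 e0 e1 : Bool,
    ((false,true,false,b1,c0,c1,d0,d1,e0,e1) ∈ T20 →
      NashD (mkB (false,true,false,b1,c0,c1,d0,d1,e0,e1))) ∧
    ((false,true,false,b1,c0,c1,d0,d1,e0,e1) ∉ T20 →
      BadEx (mkB (false,true,false,b1,c0,c1,d0,d1,e0,e1))) := by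
  decide

lemma key_ftt : ∀ b1 c0 c1 d0 d1 e0 e1 : Bool,
    ((false,true,true,b1,c0,c1,d0,d1,e0,e1) ∈ T20 →
      NashD (mkB (false,true,true,b1,c0,c1,d0,d1,e0,e1))) ∧
    ((false,true,true,b1,c0,c1,d0,d1,e0,e1) ∉ T20 →
      BadEx (mkB (false,true,true,b1,c0,c1,d0,d1,e0,e1))) := by
  decide

lemma key_tff : ∀ b1 c0 c1 d0 d1 e0 e1 : Bool,
    ((true,false,false,b1,c0,c1,d0,d1,e0,e1) ∈ T20 →
      NashD (mkB (true,false,false,b1,c0,c1,d0,d1,e0,e1))) ∧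
    ((true,false,false,b1,c0,c1,d0,d1,e0,e1) ∉ T20 →
      BadEx (mkB (true,false,false,b1,c0,c1,d0,d1,e0,e1))) := by
  decide

lemma key_tft : ∀ b1 c0 c1 d0 d1 e0 e1 : Bool,
    ((true,false,true,b1,c0,c1,d0,d1,e0,e1) ∈ T20 →
      NashD (mkB (true,false,true,b1,c0,c1,d0,d1,e0,e1))) ∧
    ((true,false,true,b1,c0,c1,d0,d1,e0,e1) ∉ T20 →
      BadEx (mkB (true,false,true,b1,c0,c1,d0,d1,e0,e1))) := by
  decide

lemma key_ttf : ∀ b1 c0 c1 d0 d1 e0 e1 : Bool,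
    ((true,true,false,b1,c0,c1,d0,d1,e0,e1) ∈ T20 →
      NashD (mkB (true,true,false,b1,c0,c1,d0,d1,e0,e1))) ∧
    ((true,true,false,b1,c0,c1,d0,d1,e0,e1) ∉ T20 →
      BadEx (mkB (true,true,false,b1,c0,c1,d0,d1,e0,e1))) := by
  decide

lemma key_ttt : ∀ b1 c0 c1 d0 d1 e0 e1 : Bool,
    ((true,true,true,b1,c0,c1,d0,d1,e0,e1) ∈ T20 →
      NashD (mkB (true,true,true,b1,c0,c1,d0,d1,e0,e1))) ∧
    ((true,true,true,b1,c0,c1,d0,d1,e0,e1) ∉ T20 →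
      BadEx (mkB (true,true,true,b1,c0,c1,d0,d1,e0,e1))) := by
  decide

lemma key : ∀ a0 a1 b0 b1 c0 c1 d0 d1 e0 e1 : Bool,
    ((a0,a1,b0,b1,c0,c1,d0,d1,e0,e1) ∈ T20 → NashD (mkB (a0,a1,b0,b1,c0,c1,d0,d1,e0,e1))) ∧
    ((a0,a1,b0,b1,c0,c1,d0,d1,e0,e1) ∉ T20 → BadEx (mkB (a0,a1,b0,b1,c0,c1,d0,d1,e0,e1))) := by
  intro a0 a1 b0 b1 c0 c1 d0 d1 e0 e1
  cases a0
  · cases a1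
    · cases b0
      · exact key_fff b1 c0 c1 d0 d1 e0 e1
      · exact key_fft b1 c0 c1 d0 d1 e0 e1
    · cases b0
      · exact key_ftf b1 c0 c1 d0 d1 e0 e1
      · exact key_ftt b1 c0 c1 d0 d1 e0 e1
  · cases a1
    · cases b0
      · exact key_tff b1 c0 c1 d0 d1 e0 e1
      · exact key_tft b1 c0 c1 d0 d1 e0 e1
    · cases b0
      · exact key_ttf b1 c0 c1 d0 d1 e0 e1
      · exact key_ttt b1 c0 c1 d0 d1 e0 e1

lemma key' (f : ZMod 5 → ZMod 2 → ZMod 2) :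
    (bOf f ∈ T20 → NashD f) ∧ (bOf f ∉ T20 → BadEx f) := by
  have h := key (bOfZ (f 0 0)) (bOfZ (f 0 1)) (bOfZ (f 1 0)) (bOfZ (f 1 1)) (bOfZ (f 2 0))
    (bOfZ (f 2 1)) (bOfZ (f 3 0)) (bOfZ (f 3 1)) (bOfZ (f 4 0)) (bOfZ (f 4 1))
  rw [show ((bOfZ (f 0 0), bOfZ (f 0 1), bOfZ (f 1 0), bOfZ (f 1 1), bOfZ (f 2 0), bOfZ (f 2 1),
      bOfZ (f 3 0), bOfZ (f 3 1), bOfZ (f 4 0), bOfZ (f 4 1)) : BBits) = bOf f from rfl,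
    mkB_surj] at h
  exact h

/-! ### Real-valued bridge -/

lemma util_eq (v0 v1 : ℝ) (f : ZMod 5 → ZMod 2 → ZMod 2) (j : ZMod 5) :
    pureUtil v0 v1 f j = ((nA 0 f j : ℝ) * v0 + (nA 1 f j : ℝ) * v1) / 6 := by
  have hq : ∀ x : ZMod 2, x = 0 ∨ x = 1 := by decide
  unfold pureUtil
  congr 1
  have hpt : ∀ t : C5Type, payoffOf v0 v1 j (fun i => f i (inputBit t i)) t
      = (if winQ f t ∧ f j (inputBit t j) = 0 then (1:ℝ) else 0) * v0
      + (if winQ f t ∧ f j (inputBit t j) = 1 then (1:ℝ) else 0) * v1 := by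
    intro t
    by_cases hw : (∑ k ∈ involvedSet t, f k (inputBit t k)) = targetBit t <;>
      rcases hq (f j (inputBit t j)) with h2 | h2 <;>
        simp [payoffOf, winQ, hw, h2]
  rw [Finset.sum_congr rfl (fun t _ => hpt t), Finset.sum_add_distrib,
    ← Finset.sum_mul, ← Finset.sum_mul, Finset.sum_boole, Finset.sum_boole]
  unfold nA
  norm_num

lemma good_le {v0 v1 : ℝ} (hv0 : 0 < v0) (hv : 3 * v0 < v1) {a b c d : ℕ}
    (hg : Good a b c d) : (a:ℝ) * v0 + b * v1 ≤ c * v0 + d * v1 := by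
  obtain ⟨h1, h2⟩ := hg
  have h1' : (b:ℝ) ≤ d := by exact_mod_cast h1
  have h2' : (a:ℝ) + 3*b ≤ c + 3*d := by exact_mod_cast h2
  nlinarith

lemma bad_lt {v0 v1 : ℝ} (hv0 : 0 < v0) (hv : 3 * v0 < v1) {a b c d : ℕ}
    (hg : Bad a b c d) : (c:ℝ) * v0 + d * v1 < a * v0 + b * v1 := by
  obtain ⟨h1, h2, h3⟩ := hg
  have h1' : (d:ℝ) ≤ b := by exact_mod_cast h1
  have h2' : (c:ℝ) + 3*d ≤ a + 3*b := by exact_mod_cast h2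
  rcases h3 with h3 | h3
  · have h3' : (d:ℝ) + 1 ≤ b := by exact_mod_cast h3
    nlinarith
  · have h3' : (c:ℝ) + 1 ≤ a := by exact_mod_cast h3
    nlinarith

lemma nash_of_nashD {v0 v1 : ℝ} (hv0 : 0 < v0) (hv : 3 * v0 < v1)
    {f : ZMod 5 → ZMod 2 → ZMod 2} (hD : NashD f) : IsNashEq v0 v1 f := by
  intro i g
  rw [util_eq, util_eq]
  have := good_le hv0 hv (hD i g)
  linarith

lemma not_nash_of_badEx {v0 v1 : ℝ} (hv0 : 0 < v0) (hv : 3 * v0 < v1)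
    {f : ZMod 5 → ZMod 2 → ZMod 2} (hB : BadEx f) : ¬ IsNashEq v0 v1 f := by
  obtain ⟨i, g, hb⟩ := hB
  intro hN
  have hle := hN i g
  rw [util_eq, util_eq] at hle
  have := bad_lt hv0 hv hb
  linarith

/-- **`NC₀₀(C₅)` has exactly 20 pure Nash equilibria when `v0/v1 < 1/3`.** -/
theorem card_nash_NC00_of_ratio_lt_third (v0 v1 : ℝ) (hv0 : 0 < v0) (hv1 : 0 < v1)
    (h : v0 / v1 < 1 / 3) :
    {f : ZMod 5 → ZMod 2 → ZMod 2 | IsNashEq v0 v1 f}.ncard = 20 := by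

  have hv : 3 * v0 < v1 := by
    rw [div_lt_div_iff₀ hv1 (by norm_num)] at h; linarith
  have hset : {f : ZMod 5 → ZMod 2 → ZMod 2 | IsNashEq v0 v1 f} = mkB '' ↑T20 := by
    ext f
    simp only [Set.mem_setOf_eq, Set.mem_image, Finset.mem_coe]
    constructor
    · intro hN
      by_cases hm : bOf f ∈ T20
      · exact ⟨bOf f, hm, mkB_surj f⟩
      · exact absurd hN (not_nash_of_badEx hv0 hv ((key' f).2 hm))
    · rintro ⟨x, hx, rfl⟩
      have hb : bOf (mkB x) ∈ T20 := by rwa [bOf_mkB]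
      exact nash_of_nashD hv0 hv ((key' (mkB x)).1 hb)
  rw [hset, Set.ncard_image_of_injective _ mkB_inj, Set.ncard_coe_finset, T20_card]
end
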